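/- Assume Condition 1 (spiked covariance structure): λ_1 ≥ ... ≥ λ_k > λ_{k+1} = λ_{k+2} = ... = λ_p, and assume δ ≠ 0. Then ||U^T β||_1 / ||U^T β||_2 ≤ √(k+1). (Consequence of Theorem 1 via Cauchy–Schwarz, as stated in the paper) -/
import Mathlib


open Matrix

/-- Under the spiked covariance structure (Condition 1) and `δ ≠ 0`, the ℓ1/ℓ2
ratio of the rotated discriminant direction `Uᵀ β` is at most `√(k+1)`. -/
theorem spiked_rotation_l1_l2_ratio
    {p k : ℕ} (hk : 1 ≤ k) (hkp : k < p)
    (S : Matrix (Fin p) (Fin p) ℝ) (hS : S.IsSymm)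
    (lam : Fin p → ℝ) (xi : Fin p → (Fin p → ℝ))
    (hpos : ∀ j, 0 < lam j)
    (hdesc : ∀ i j : Fin p, i ≤ j → lam j ≤ lam i)
    (horth : ∀ i j : Fin p, xi i ⬝ᵥ xi j = if i = j then (1 : ℝ) else 0)
    (heig : ∀ j, S.mulVec (xi j) = lam j • xi j)
    (δ : Fin p → ℝ) (hδ : δ ≠ 0) (ρ : ℝ) (hρ : 0 < ρ)
    (U : Matrix (Fin p) (Fin p) ℝ) (hU : Uᵀ * U = 1)
    (η : Fin p → ℝ) (hηdesc : ∀ i j : Fin p, i ≤ j → η j ≤ η i)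
    (hdiag : Uᵀ * (S + ρ • vecMulVec δ δ) * U = Matrix.diagonal η)
    -- Condition 1 (spiked covariance structure)
    (hgap : lam ⟨k, hkp⟩ < lam ⟨k - 1, by omega⟩)
    (hflat : ∀ j : Fin p, k ≤ (j : ℕ) → lam j = lam ⟨k, hkp⟩) :
    (∑ i, |(Uᵀ).mulVec (S⁻¹.mulVec δ) i|) /
        Real.sqrt (∑ i, ((Uᵀ).mulVec (S⁻¹.mulVec δ) i) ^ 2) ≤
      Real.sqrt (k + 1) := by
  classical
  set lam0 := lam ⟨k, hkp⟩ with hlam0def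
  have hlam0pos : 0 < lam0 := hpos _
  -- X : rows are the eigenvectors
  set X : Matrix (Fin p) (Fin p) ℝ := Matrix.of (fun i j => xi i j) with hXdef
  have hXXT : X * Xᵀ = 1 := by
    ext i j
    simpa [Matrix.mul_apply, Matrix.one_apply, dotProduct, hXdef] using horth i j
  have hXTX : Xᵀ * X = 1 := mul_eq_one_comm.mp hXXT
  have hXv : ∀ v : Fin p → ℝ, Xᵀ.mulVec (X.mulVec v) = v := by
    intro v; rw [mulVec_mulVec, hXTX, one_mulVec]
  set D := Matrix.diagonal lam with hDdef
  have hSX : S * Xᵀ = Xᵀ * D := by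
    ext i j
    have h1 := congrFun (heig j) i
    simp only [Matrix.mulVec, dotProduct, Pi.smul_apply, smul_eq_mul] at h1
    calc (S * Xᵀ) i j = ∑ l, S i l * xi j l := by
          simp [Matrix.mul_apply, hXdef]
      _ = lam j * xi j i := h1
      _ = (Xᵀ * D) i j := by
          rw [hDdef, Matrix.mul_diagonal]
          simp [hXdef, mul_comm]
  have hSdecomp : S = Xᵀ * D * X := by
    calc S = S * (Xᵀ * X) := by rw [hXTX, mul_one]
      _ = (S * Xᵀ) * X := by rw [Matrix.mul_assoc]
      _ = Xᵀ * D * X := by rw [hSX]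
  -- the explicit inverse
  set Dinv := Matrix.diagonal (fun j => (lam j)⁻¹) with hDinvdef
  set Sinv := Xᵀ * Dinv * X with hSinvdef
  have hDinvD : Dinv * D = 1 := by
    rw [hDinvdef, hDdef, diagonal_mul_diagonal]
    rw [show (fun i => (lam i)⁻¹ * lam i) = fun _ => (1 : ℝ) from
      funext fun i => inv_mul_cancel₀ (hpos i).ne', Matrix.diagonal_one]
  have hSinvS : Sinv * S = 1 := by
    have h1 : Sinv * S = Xᵀ * (Dinv * (X * (Xᵀ * (D * X)))) := by
      rw [hSinvdef, hSdecomp]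
      simp only [Matrix.mul_assoc]
    rw [h1, show X * (Xᵀ * (D * X)) = D * X by rw [← Matrix.mul_assoc, hXXT, one_mul],
      show Dinv * (D * X) = X by rw [← Matrix.mul_assoc, hDinvD, one_mul]]
    exact hXTX
  have hSinveq : S⁻¹ = Sinv := Matrix.inv_eq_left_inv hSinvS
  have hSinvsymm : Sinvᵀ = Sinv := by
    rw [hSinvdef, hDinvdef]
    rw [Matrix.transpose_mul, Matrix.transpose_mul, Matrix.transpose_transpose,
      Matrix.diagonal_transpose, Matrix.mul_assoc]
  -- columns of U
  set u : Fin p → (Fin p → ℝ) := fun j i => U i j with hudef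
  have hUUT : U * Uᵀ = 1 := mul_eq_one_comm.mp hU
  have huorth : ∀ i j, u i ⬝ᵥ u j = if i = j then (1 : ℝ) else 0 := by
    intro i j
    have h1 := congrFun (congrFun hU i) j
    simpa [Matrix.mul_apply, Matrix.one_apply, dotProduct, hudef] using h1
  set T := S + ρ • vecMulVec δ δ with hTdef
  have hdiag' : Uᵀ * (T * U) = Matrix.diagonal η := by
    rw [← Matrix.mul_assoc]; exact hdiag
  have hTU : T * U = U * Matrix.diagonal η := by
    calc T * U = (U * Uᵀ) * (T * U) := by rw [hUUT, one_mul]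
      _ = U * (Uᵀ * (T * U)) := by simp only [Matrix.mul_assoc]
      _ = U * Matrix.diagonal η := by rw [hdiag']
  have hTu : ∀ j, T.mulVec (u j) = η j • u j := by
    intro j; funext i
    have h1 := congrFun (congrFun hTU i) j
    rw [Matrix.mul_diagonal] at h1
    simpa [Matrix.mul_apply, Matrix.mulVec, dotProduct, hudef, mul_comm] using h1
  -- quadratic form identities
  have hquad : ∀ v : Fin p → ℝ,
      v ⬝ᵥ S.mulVec v = ∑ i, lam i * (X.mulVec v i) ^ 2 := by
    intro v
    rw [hSdecomp, ← mulVec_mulVec, ← mulVec_mulVec, dotProduct_mulVec, vecMul_transpose]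
    rw [hDdef]
    simp only [dotProduct, mulVec_diagonal]
    exact Finset.sum_congr rfl fun i _ => by ring
  have hnorm : ∀ v : Fin p → ℝ, ∑ i, (X.mulVec v i) ^ 2 = v ⬝ᵥ v := by
    intro v
    have h1 : X.mulVec v ⬝ᵥ X.mulVec v = v ⬝ᵥ v := by
      rw [dotProduct_mulVec, ← mulVec_transpose, hXv]
    rw [← h1]
    exact Finset.sum_congr rfl fun i _ => by ring
  have hlamge : ∀ i, lam0 ≤ lam i := by
    intro i
    by_cases h : k ≤ (i : ℕ)
    · rw [hflat i h]
    · exact hdesc i ⟨k, hkp⟩ (by simp only [Fin.le_def]; omega)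
  -- if lam acts as lam0 on X v then v is a lam0-eigenvector of S
  have hSflat : ∀ v : Fin p → ℝ,
      (∀ i, lam i * X.mulVec v i = lam0 * X.mulVec v i) → S.mulVec v = lam0 • v := by
    intro v hv
    calc S.mulVec v = Xᵀ.mulVec (D.mulVec (X.mulVec v)) := by
          rw [mulVec_mulVec, mulVec_mulVec, ← hSdecomp]
      _ = Xᵀ.mulVec (lam0 • X.mulVec v) := by
          have hDx : D.mulVec (X.mulVec v) = lam0 • X.mulVec v := by
            funext i
            rw [hDdef, mulVec_diagonal]
            simpa using hv i
          rw [hDx]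
      _ = lam0 • v := by rw [mulVec_smul, hXv]
  -- the rank-one part
  have hvmv : ∀ v : Fin p → ℝ, (vecMulVec δ δ).mulVec v = (δ ⬝ᵥ v) • δ := by
    intro v; funext i
    simp only [Matrix.mulVec, dotProduct, vecMulVec_apply, Pi.smul_apply, smul_eq_mul,
      Finset.sum_mul]
    exact Finset.sum_congr rfl fun j _ => by ring
  have hTmul : ∀ v : Fin p → ℝ, T.mulVec v = S.mulVec v + (ρ * (δ ⬝ᵥ v)) • δ := by
    intro v
    rw [hTdef, add_mulVec, smul_mulVec, hvmv, smul_smul]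
  -- Step A : η j ≤ lam0 for j ≥ k+1
  have hηle : ∀ j0 : Fin p, k + 1 ≤ (j0 : ℕ) → η j0 ≤ lam0 := by
    intro j0 hj0
    have hk1p : k + 1 < p := lt_of_le_of_lt hj0 j0.isLt
    refine le_trans (hηdesc ⟨k + 1, hk1p⟩ j0 (by simp only [Fin.le_def]; omega)) ?_
    by_contra hlt
    push_neg at hlt
    -- build the constraint matrix
    set emb : Fin (k + 2) → Fin p := fun r => ⟨(r : ℕ), by omega⟩ with hembdef
    have hembinj : Function.Injective emb := by
      intro a b hab
      simpa [hembdef, Fin.ext_iff] using hab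
    set A : Matrix (Fin (k + 2)) (Fin (k + 2)) ℝ := fun r c =>
      if (r : ℕ) < k then xi ⟨(r : ℕ), by omega⟩ ⬝ᵥ u (emb c)
      else if (r : ℕ) = k then δ ⬝ᵥ u (emb c) else 0 with hAdef
    have hdetA : A.det = 0 := by
      refine Matrix.det_eq_zero_of_row_eq_zero ⟨k + 1, by omega⟩ fun c => ?_
      simp [hAdef]
    obtain ⟨c, hc0, hAc⟩ := (Matrix.exists_mulVec_eq_zero_iff).mpr hdetA
    set v : Fin p → ℝ := ∑ r : Fin (k + 2), c r • u (emb r) with hvdef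
    have hdotsum : ∀ (w : Fin p → ℝ) (f : Fin (k + 2) → ℝ),
        w ⬝ᵥ (∑ r : Fin (k + 2), f r • u (emb r)) = ∑ r, f r * (w ⬝ᵥ u (emb r)) := by
      intro w f
      simp only [dotProduct, Finset.sum_apply, Pi.smul_apply, smul_eq_mul]
      calc ∑ i, w i * ∑ r : Fin (k + 2), f r * u (emb r) i
          = ∑ i, ∑ r : Fin (k + 2), w i * (f r * u (emb r) i) :=
            Finset.sum_congr rfl fun i _ => Finset.mul_sum _ _ _
        _ = ∑ r : Fin (k + 2), ∑ i, w i * (f r * u (emb r) i) := Finset.sum_comm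
        _ = ∑ r : Fin (k + 2), f r * ∑ i, w i * u (emb r) i := by
            refine Finset.sum_congr rfl fun r _ => ?_
            rw [Finset.mul_sum]
            exact Finset.sum_congr rfl fun i _ => by ring
    have hdotu : ∀ (f : Fin (k + 2) → ℝ) (r0 : Fin (k + 2)),
        u (emb r0) ⬝ᵥ (∑ r : Fin (k + 2), f r • u (emb r)) = f r0 := by
      intro f r0
      rw [hdotsum]
      have h1 : ∀ r : Fin (k + 2), f r * (u (emb r0) ⬝ᵥ u (emb r)) =
          if r = r0 then f r0 else 0 := by
        intro r
        rw [huorth]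
        by_cases h : r = r0
        · simp [h]
        · have h2 : emb r0 ≠ emb r := fun hh => h (hembinj hh).symm
          simp [h2, h]
      rw [Finset.sum_congr rfl fun r _ => h1 r]
      simp
    have hAcrow : ∀ r : Fin (k + 2), ∑ cc, A r cc * c cc = 0 := by
      intro r
      have := congrFun hAc r
      simpa [Matrix.mulVec, dotProduct] using this
    have hxiv : ∀ i : Fin p, (i : ℕ) < k → xi i ⬝ᵥ v = 0 := by
      intro i hi
      have h1 := hAcrow ⟨(i : ℕ), by omega⟩
      rw [hvdef, hdotsum]
      simp only [hAdef] at h1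
      simp only [show ((⟨(i : ℕ), by omega⟩ : Fin (k + 2)) : ℕ) = (i : ℕ) from rfl, hi,
        if_true] at h1
      rw [← h1]
      exact Finset.sum_congr rfl fun r _ => by rw [mul_comm]
    have hδv : δ ⬝ᵥ v = 0 := by
      have h1 := hAcrow ⟨k, by omega⟩
      rw [hvdef, hdotsum]
      simp only [hAdef] at h1
      simp only [show ((⟨k, by omega⟩ : Fin (k + 2)) : ℕ) = k from rfl, lt_irrefl, if_false,
        if_true] at h1
      rw [← h1]
      exact Finset.sum_congr rfl fun r _ => by rw [mul_comm]
    have hXvlow : ∀ i, lam i * X.mulVec v i = lam0 * X.mulVec v i := by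
      intro i
      by_cases h : (i : ℕ) < k
      · have h2 : X.mulVec v i = 0 := by
          simpa [Matrix.mulVec, dotProduct, hXdef] using hxiv i h
        simp [h2]
      · rw [hflat i (by omega)]
    have hSv : S.mulVec v = lam0 • v := hSflat v hXvlow
    have hTv : T.mulVec v = lam0 • v := by
      rw [hTmul, hSv, hδv, mul_zero, zero_smul, add_zero]
    have hTv2 : T.mulVec v = ∑ r : Fin (k + 2), (c r * η (emb r)) • u (emb r) := by
      rw [hvdef]
      have hlin : T.mulVec (∑ r : Fin (k + 2), c r • u (emb r)) =
          ∑ r : Fin (k + 2), c r • T.mulVec (u (emb r)) := by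
        simp only [← Matrix.mulVecLin_apply, map_sum, _root_.map_smul]
      rw [hlin]
      exact Finset.sum_congr rfl fun r _ => by rw [hTu, smul_smul]
    have hceq : ∀ r0 : Fin (k + 2), c r0 * η (emb r0) = lam0 * c r0 := by
      intro r0
      have h1 : u (emb r0) ⬝ᵥ T.mulVec v = c r0 * η (emb r0) := by
        rw [hTv2, hdotu]
      have h2 : u (emb r0) ⬝ᵥ T.mulVec v = lam0 * c r0 := by
        rw [hTv, dotProduct_smul, smul_eq_mul, hvdef, hdotu]
      rw [← h1, h2]
    have : c = 0 := by
      funext r0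
      have h3 := hceq r0
      have hle : (⟨k + 1, hk1p⟩ : Fin p) ≤ emb r0 ∨ emb r0 ≤ (⟨k + 1, hk1p⟩ : Fin p) :=
        le_total _ _
      have hηbig : lam0 < η (emb r0) := by
        refine lt_of_lt_of_le hlt (hηdesc (emb r0) ⟨k + 1, hk1p⟩ ?_)
        simp only [Fin.le_def, hembdef]
        omega
      have h4 : c r0 * (η (emb r0) - lam0) = 0 := by ring_nf; linarith [h3]
      rcases mul_eq_zero.mp h4 with h | h
      · exact h
      · exact absurd h (by linarith)
    exact hc0 this
  -- Step B : for j ≥ k+1 the column u j is a lam0-eigenvector orthogonal to δ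
  have hcolprop : ∀ j : Fin p, k + 1 ≤ (j : ℕ) →
      δ ⬝ᵥ u j = 0 ∧ S.mulVec (u j) = lam0 • u j := by
    intro j hj
    have huu : u j ⬝ᵥ u j = 1 := by simpa using huorth j j
    have h1 : u j ⬝ᵥ T.mulVec (u j) = η j := by
      rw [hTu, dotProduct_smul, smul_eq_mul, huu, mul_one]
    have h2 : u j ⬝ᵥ T.mulVec (u j) =
        u j ⬝ᵥ S.mulVec (u j) + ρ * (δ ⬝ᵥ u j) ^ 2 := by
      rw [hTmul, dotProduct_add, dotProduct_smul, smul_eq_mul, dotProduct_comm (u j) δ]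
      ring
    have h4 : ∑ i, (X.mulVec (u j) i) ^ 2 = 1 := by rw [hnorm, huu]
    have h3 : lam0 ≤ u j ⬝ᵥ S.mulVec (u j) := by
      rw [hquad]
      calc lam0 = ∑ i, lam0 * (X.mulVec (u j) i) ^ 2 := by
            rw [← Finset.mul_sum, h4, mul_one]
        _ ≤ ∑ i, lam i * (X.mulVec (u j) i) ^ 2 :=
            Finset.sum_le_sum fun i _ =>
              mul_le_mul_of_nonneg_right (hlamge i) (sq_nonneg _)
    have hηj : η j = lam0 := by
      refine le_antisymm (hηle j hj) ?_
      have h5 : 0 ≤ ρ * (δ ⬝ᵥ u j) ^ 2 := mul_nonneg hρ.le (sq_nonneg _)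
      linarith
    have ht0 : δ ⬝ᵥ u j = 0 := by
      have h5 : ρ * (δ ⬝ᵥ u j) ^ 2 ≤ 0 := by linarith
      have h6 : (δ ⬝ᵥ u j) ^ 2 = 0 := by nlinarith [sq_nonneg (δ ⬝ᵥ u j)]
      exact pow_eq_zero_iff (n := 2) (by norm_num) |>.mp h6
    refine ⟨ht0, ?_⟩
    have h5 : u j ⬝ᵥ S.mulVec (u j) = lam0 := by
      rw [ht0] at h2
      simp only [ne_eq, OfNat.ofNat_ne_zero, not_false_eq_true, zero_pow, mul_zero,
        add_zero] at h2
      rw [← h2, h1, hηj]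
    have hq : ∑ i, (lam i - lam0) * (X.mulVec (u j) i) ^ 2 = 0 := by
      have : ∑ i, (lam i - lam0) * (X.mulVec (u j) i) ^ 2 =
          (∑ i, lam i * (X.mulVec (u j) i) ^ 2) -
            lam0 * ∑ i, (X.mulVec (u j) i) ^ 2 := by
        rw [Finset.mul_sum, ← Finset.sum_sub_distrib]
        exact Finset.sum_congr rfl fun i _ => by ring
      rw [this, ← hquad, h5, h4, mul_one, sub_self]
    have hterm := (Finset.sum_eq_zero_iff_of_nonneg fun i _ =>
      mul_nonneg (sub_nonneg.mpr (hlamge i)) (sq_nonneg _)).mp hq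
    refine hSflat (u j) fun i => ?_
    have h6 := hterm i (Finset.mem_univ i)
    rcases mul_eq_zero.mp h6 with h | h
    · have : lam i = lam0 := by linarith
      rw [this]
    · have : X.mulVec (u j) i = 0 := pow_eq_zero_iff (n := 2) (by norm_num) |>.mp h
      rw [this, mul_zero, mul_zero]
  -- the rotated vector vanishes outside the first k+1 coordinates
  set y := (Uᵀ).mulVec (S⁻¹.mulVec δ) with hydef
  have hy0 : ∀ j : Fin p, k + 1 ≤ (j : ℕ) → y j = 0 := by
    intro j hj
    obtain ⟨hδu, hSu⟩ := hcolprop j hj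
    have hSinvu : Sinv.mulVec (u j) = lam0⁻¹ • u j := by
      have h1 : Sinv.mulVec (S.mulVec (u j)) = u j := by
        rw [mulVec_mulVec, hSinvS, one_mulVec]
      rw [hSu, mulVec_smul] at h1
      calc Sinv.mulVec (u j) = lam0⁻¹ • (lam0 • Sinv.mulVec (u j)) := by
            rw [smul_smul, inv_mul_cancel₀ hlam0pos.ne', one_smul]
        _ = lam0⁻¹ • u j := by rw [h1]
    have h2 : y j = u j ⬝ᵥ Sinv.mulVec δ := by
      rw [hydef, hSinveq]
      simp [Matrix.mulVec, dotProduct, Matrix.transpose_apply, hudef]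
    rw [h2, dotProduct_mulVec, ← mulVec_transpose, hSinvsymm, hSinvu]
    rw [smul_dotProduct, smul_eq_mul, dotProduct_comm, hδu, mul_zero]
  -- Cauchy–Schwarz on the support
  set F : Finset (Fin p) := Finset.univ.filter (fun i => (i : ℕ) < k + 1) with hFdef
  have hk1p : k + 1 ≤ p := hkp
  have hFcard : F.card = k + 1 := by
    have himg : F = Finset.image (Fin.castLE hk1p) Finset.univ := by
      ext x
      simp only [hFdef, Finset.mem_filter, Finset.mem_univ, true_and, Finset.mem_image]
      constructor
      · intro hx
        exact ⟨⟨(x : ℕ), hx⟩, Fin.ext rfl⟩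
      · rintro ⟨a, -, rfl⟩
        exact a.isLt
    rw [himg, Finset.card_image_of_injective _ (Fin.castLE_injective hk1p),
      Finset.card_univ, Fintype.card_fin]
  have hsum1 : ∑ i, |y i| = ∑ i ∈ F, |y i| := by
    symm
    refine Finset.sum_subset (Finset.subset_univ F) fun x _ hx => ?_
    have hxk : k + 1 ≤ (x : ℕ) := by
      by_contra hc
      exact hx (by simp [hFdef]; omega)
    rw [hy0 x hxk, abs_zero]
  have hcs : (∑ i ∈ F, |y i|) ^ 2 ≤ (k + 1 : ℝ) * ∑ i ∈ F, |y i| ^ 2 := by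
    have := sq_sum_le_card_mul_sum_sq (s := F) (f := fun i => |y i|)
    have hcast : ((F.card : ℕ) : ℝ) = (k + 1 : ℝ) := by rw [hFcard]; push_cast; ring
    calc (∑ i ∈ F, |y i|) ^ 2 ≤ (F.card : ℝ) * ∑ i ∈ F, |y i| ^ 2 := by exact_mod_cast this
      _ = (k + 1 : ℝ) * ∑ i ∈ F, |y i| ^ 2 := by rw [hcast]
  have hsum2 : ∑ i ∈ F, |y i| ^ 2 ≤ ∑ i, y i ^ 2 := by
    calc ∑ i ∈ F, |y i| ^ 2 = ∑ i ∈ F, y i ^ 2 :=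
          Finset.sum_congr rfl fun i _ => sq_abs _
      _ ≤ ∑ i, y i ^ 2 :=
          Finset.sum_le_sum_of_subset_of_nonneg (Finset.subset_univ F)
            fun i _ _ => sq_nonneg _
  have hN0 : 0 ≤ ∑ i, |y i| := Finset.sum_nonneg fun i _ => abs_nonneg _
  have hQ0 : 0 ≤ ∑ i, y i ^ 2 := Finset.sum_nonneg fun i _ => sq_nonneg _
  have hkey : (∑ i, |y i|) ^ 2 ≤ (k + 1 : ℝ) * ∑ i, y i ^ 2 := by
    rw [hsum1]
    calc (∑ i ∈ F, |y i|) ^ 2 ≤ (k + 1 : ℝ) * ∑ i ∈ F, |y i| ^ 2 := hcs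
      _ ≤ (k + 1 : ℝ) * ∑ i, y i ^ 2 :=
          mul_le_mul_of_nonneg_left hsum2 (by positivity)
  rcases eq_or_lt_of_le hQ0 with hQ | hQ
  · have hN : (∑ i, |y i|) = 0 := by nlinarith
    rw [hN, zero_div]
    positivity
  · rw [div_le_iff₀ (Real.sqrt_pos.mpr hQ), ← Real.sqrt_mul (by positivity) (∑ i, y i ^ 2)]
    exact (Real.le_sqrt hN0 (by positivity)).mpr hkey
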